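/- Let H be a real Hilbert space, y₀ ∈ H, and let C : [0,∞) → Conv_H satisfy e(C(t),C(s)) ≤ s − t whenever 0 ≤ t ≤ s. Then the unique locally Lipschitz solution y of the sweeping process driven by C with initial datum y₀ (i.e. y(t) ∈ C(t) for all t, −y′(t) ∈ N_{C(t)}(y(t)) for a.e. t ≥ 0, and y(0) = Proj_{C(0)}(y₀)) is 1-Lipschitz continuous: ‖y(t) − y(s)‖ ≤ |t − s| for all t, s ≥ 0. -/

import Mathlib

open Filter Metric Set MeasureTheory Topology Function
open scoped ENNReal NNReal

variable {H : Type*} [NormedAddCommGroup H] [InnerProductSpace ℝ H]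

/-- A nonempty closed convex subset of `H` (an element of `Conv_H`). -/
def IsConvexBody (K : Set H) : Prop := K.Nonempty ∧ IsClosed K ∧ Convex ℝ K

/-- The excess `e(A,B) = sup_{x ∈ A} dist(x,B)` of `A` over `B`. -/
noncomputable def excess (A B : Set H) : ℝ≥0∞ := ⨆ x ∈ A, EMetric.infEdist x B

/-- The retraction `ret(C,J)` of the moving set `C` on `J`. -/
noncomputable def ret (C : ℝ → Set H) (J : Set ℝ) : ℝ≥0∞ :=
  ⨆ (m : ℕ) (t : Fin (m + 1) → ℝ) (_ : StrictMono t) (_ : ∀ i, t i ∈ J),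
    ∑ i : Fin m, excess (C (t (Fin.castSucc i))) (C (t (Fin.succ i)))

/-- `C` has locally bounded retraction on `[0,∞)`. -/
def LocBddRet (C : ℝ → Set H) : Prop := ∀ a b : ℝ, 0 ≤ a → ret C (Icc a b) ≠ ⊤

/-- The pointwise variation of `f` on `J`. -/
noncomputable def pVar (f : ℝ → H) (J : Set ℝ) : ℝ≥0∞ :=
  ⨆ (m : ℕ) (t : Fin (m + 1) → ℝ) (_ : StrictMono t) (_ : ∀ i, t i ∈ J),
    ∑ i : Fin m, edist (f (t (Fin.castSucc i))) (f (t (Fin.succ i)))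

/-- `f` has locally bounded variation on `[0,∞)`. -/
def LocBV (f : ℝ → H) : Prop := ∀ a b : ℝ, 0 ≤ a → pVar f (Icc a b) ≠ ⊤

/-- The exterior normal cone `N_K(x)`. -/
def normalCone (K : Set H) (x : H) : Set H :=
  {u : H | ∀ v ∈ K, (inner ℝ (v - x) u : ℝ) ≤ 0}

/-- `p` is the metric projection of `x` onto `K`. -/
def IsProj (K : Set H) (x p : H) : Prop :=
  p ∈ K ∧ ∀ v ∈ K, ‖x - p‖ ≤ ‖x - v‖

/-- `C(t+) = {x : dist(x, C(s)) → 0 as s → t+}`. -/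
def rightLimSet (C : ℝ → Set H) (t : ℝ) : Set H :=
  {x : H | Tendsto (fun s => infDist x (C s)) (𝓝[>] t) (𝓝 0)}

/-- `C(t−)`, with the convention `C(0−) := C(0)`. -/
noncomputable def leftLimSet (C : ℝ → Set H) (t : ℝ) : Set H :=
  if t = 0 then C 0 else {x : H | Tendsto (fun s => infDist x (C s)) (𝓝[<] t) (𝓝 0)}

/-- The continuity set of `C` with respect to the excess. -/
noncomputable def contSet (C : ℝ → Set H) : Set ℝ :=
  {t | excess (C t) (rightLimSet C t) = 0 ∧ excess (leftLimSet C t) (C t) = 0}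

/-- `y` is a locally Lipschitz solution of the sweeping process driven by `C` with initial
datum `y₀`. -/
def LipSweepSol (C : ℝ → Set H) (y₀ : H) (y : ℝ → H) : Prop :=
  (∀ a b : ℝ, 0 ≤ a → ∃ L : ℝ≥0, LipschitzOnWith L y (Icc a b)) ∧
  (∀ t : ℝ, 0 ≤ t → y t ∈ C t) ∧
  (∀ᵐ t ∂(volume : Measure ℝ), 0 ≤ t →
    ∃ d : H, HasDerivWithinAt y d (Ici 0) t ∧ -d ∈ normalCone (C t) (y t)) ∧
  IsProj (C 0) y₀ (y 0)

/-!
At a time `τ` where `-y'(τ) ∈ N_{C(τ)}(y(τ))`, testing the normal cone against points of `C(τ)`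
near `y(t)`, `t < τ`, gives `⟪y(τ) - y(t), y'(τ)⟫ ≤ dist(y(t), C(τ)) ‖y'(τ)‖ ≤ (τ - t) ‖y'(τ)‖`;
dividing by `τ - t` and letting `t → τ⁻` yields `‖y'(τ)‖ ≤ 1`. A locally Lipschitz curve is
absolutely continuous, so this a.e. bound on its speed bounds its increments: apply the
fundamental theorem of calculus to `φ ∘ y` for a norming functional `φ` of `y(b) - y(a)`.
-/

open scoped RealInnerProductSpace

namespace AbsolutelyContinuousOnInterval

theorem comp_lipschitzWith {X Y : Type*} [PseudoMetricSpace X] [PseudoMetricSpace Y]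
    {f : ℝ → X} {g : X → Y} {K : ℝ≥0} {a b : ℝ} (hg : LipschitzWith K g)
    (hf : AbsolutelyContinuousOnInterval f a b) :
    AbsolutelyContinuousOnInterval (g ∘ f) a b := by
  refine squeeze_zero (fun _ ↦ Finset.sum_nonneg fun _ _ ↦ dist_nonneg) (fun _ ↦ ?_)
    (by simpa using Tendsto.const_mul (K : ℝ) hf)
  rw [Finset.mul_sum]
  exact Finset.sum_le_sum fun _ _ ↦ hg.dist_le_mul _ _

theorem sub_le_mul_of_ae_deriv_le {f : ℝ → ℝ} {a b M : ℝ} (hab : a ≤ b)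
    (hf : AbsolutelyContinuousOnInterval f a b) (hM : ∀ᵐ x, x ∈ Ioo a b → deriv f x ≤ M) :
    f b - f a ≤ M * (b - a) := by
  have hM' : ∀ᵐ x ∂volume.restrict (Icc a b), deriv f x ≤ M := by
    rw [← Measure.restrict_congr_set Ioo_ae_eq_Icc]
    exact (ae_restrict_iff' measurableSet_Ioo).2 hM
  calc f b - f a = ∫ x in a..b, deriv f x := hf.integral_deriv_eq_sub.symm
    _ ≤ ∫ _ in a..b, M := intervalIntegral.integral_mono_ae_restrict hab
        hf.intervalIntegrable_deriv intervalIntegrable_const hM'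
    _ = M * (b - a) := by simp [mul_comm]

theorem norm_sub_le_mul_of_ae_norm_deriv_le {E : Type*} [NormedAddCommGroup E]
    [NormedSpace ℝ E] {f : ℝ → E} {a b M : ℝ} (hab : a ≤ b)
    (hf : AbsolutelyContinuousOnInterval f a b)
    (hM : ∀ᵐ x, x ∈ Ioo a b → ∃ f', HasDerivAt f f' x ∧ ‖f'‖ ≤ M) :
    ‖f b - f a‖ ≤ M * (b - a) := by
  obtain ⟨φ, hφ, hφf⟩ := exists_dual_vector'' ℝ (f b - f a)
  have hderiv : ∀ᵐ x, x ∈ Ioo a b → deriv (φ ∘ f) x ≤ M := by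
    filter_upwards [hM] with x hx hxab
    obtain ⟨f', hf', hf'M⟩ := hx hxab
    rw [(φ.hasFDerivAt.comp_hasDerivAt x hf').deriv]
    calc φ f' ≤ ‖φ‖ * ‖f'‖ := (le_abs_self _).trans (φ.le_opNorm f')
      _ ≤ M := by nlinarith [norm_nonneg φ, norm_nonneg f']
  calc ‖f b - f a‖ = φ (f b) - φ (f a) := by simpa using hφf.symm
    _ ≤ M * (b - a) := (hf.comp_lipschitzWith φ.lipschitz).sub_le_mul_of_ae_deriv_le hab hderiv

end AbsolutelyContinuousOnInterval

theorem infDist_le_of_excess_le {E : Type*} [NormedAddCommGroup E] {A B : Set E} {x : E} {r : ℝ}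
    (hx : x ∈ A) (hr : 0 ≤ r) (h : excess A B ≤ ENNReal.ofReal r) : infDist x B ≤ r :=
  ENNReal.toReal_le_of_le_ofReal hr <|
    (le_iSup₂ (f := fun x (_ : x ∈ A) ↦ infEDist x B) x hx).trans h

theorem inner_sub_le_infDist_mul_of_neg_mem_normalCone {K : Set H} {x z d : H} (hx : x ∈ K)
    (hd : -d ∈ normalCone K x) : ⟪x - z, d⟫ ≤ infDist z K * ‖d‖ := by
  rcases (norm_nonneg d).eq_or_lt with h0 | hpos
  · simp [norm_eq_zero.1 h0.symm]
  rw [← div_le_iff₀ hpos, le_infDist ⟨x, hx⟩]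
  intro v hv
  have hxv : ⟪x - v, d⟫ ≤ 0 := by
    simpa [inner_neg_right, ← inner_neg_left] using hd v hv
  rw [div_le_iff₀ hpos]
  calc ⟪x - z, d⟫ = ⟪x - v, d⟫ + ⟪v - z, d⟫ := by rw [← inner_add_left, sub_add_sub_cancel]
    _ ≤ ‖v - z‖ * ‖d‖ := by linarith [real_inner_le_norm (v - z) d]
    _ = dist z v * ‖d‖ := by rw [dist_comm, dist_eq_norm]

theorem norm_le_of_hasDerivWithinAt_Iio_of_neg_mem_normalCone {C : ℝ → Set H} {y : ℝ → H}
    {τ : ℝ} {d : H} {L : ℝ≥0}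
    (hexc : ∀ᶠ t in 𝓝[<] τ, excess (C t) (C τ) ≤ ENNReal.ofReal (L * (τ - t)))
    (hyC : ∀ᶠ t in 𝓝[<] τ, y t ∈ C t) (hyτ : y τ ∈ C τ)
    (hd : HasDerivWithinAt y d (Iio τ) τ) (hN : -d ∈ normalCone (C τ) (y τ)) : ‖d‖ ≤ L := by
  have hslope : Tendsto (fun t ↦ ⟪slope y τ t, d⟫) (𝓝[<] τ) (𝓝 (‖d‖ ^ 2)) := by
    rw [← real_inner_self_eq_norm_sq]
    exact ((hasDerivWithinAt_iff_tendsto_slope' self_notMem_Iio).1 hd).inner tendsto_const_nhds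
  have hbound : ∀ᶠ t in 𝓝[<] τ, ⟪slope y τ t, d⟫ ≤ L * ‖d‖ := by
    filter_upwards [hexc, hyC, self_mem_nhdsWithin] with t hexc_t hyC_t (ht : t < τ)
    have hpos : 0 < τ - t := sub_pos.2 ht
    have hdist := infDist_le_of_excess_le hyC_t (by positivity) hexc_t
    rw [slope_comm, slope_def_module, real_inner_smul_left, inv_mul_le_iff₀ hpos]
    calc ⟪y τ - y t, d⟫ ≤ infDist (y t) (C τ) * ‖d‖ :=
          inner_sub_le_infDist_mul_of_neg_mem_normalCone hyτ hN
      _ ≤ L * (τ - t) * ‖d‖ := by gcongr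
      _ = (τ - t) * (L * ‖d‖) := by ring
  have := le_of_tendsto hslope hbound
  nlinarith [norm_nonneg d, L.coe_nonneg]

theorem sweeping_solution_one_lipschitz_general
    (C : ℝ → Set H)
    (hLip : ∀ t s : ℝ, 0 ≤ t → t ≤ s → excess (C t) (C s) ≤ ENNReal.ofReal (s - t))
    (y₀ : H) (y : ℝ → H) (hy : LipSweepSol C y₀ y) :
    ∀ s t : ℝ, 0 ≤ s → 0 ≤ t → ‖y t - y s‖ ≤ |t - s| := by
  obtain ⟨hloc, hmem, hderiv, -⟩ := hy
  have hspeed : ∀ τ > 0, ∀ d, HasDerivAt y d τ → -d ∈ normalCone (C τ) (y τ) → ‖d‖ ≤ 1 := by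
    intro τ hτ d hd hN
    have hpast : ∀ᶠ t in 𝓝[<] τ, 0 ≤ t := mem_of_superset (Ioo_mem_nhdsLT hτ) fun t ht ↦ ht.1.le
    refine norm_le_of_hasDerivWithinAt_Iio_of_neg_mem_normalCone (L := 1) ?_
      (hpast.mono fun t ht ↦ hmem t ht) (hmem τ hτ.le) hd.hasDerivWithinAt hN
    filter_upwards [hpast, self_mem_nhdsWithin] with t ht (htτ : t < τ)
    simpa using hLip t τ ht htτ.le
  have hincr : ∀ a b, 0 ≤ a → a ≤ b → ‖y b - y a‖ ≤ b - a := by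
    intro a b ha hab
    obtain ⟨L, hL⟩ := hloc a b ha
    rw [← uIcc_of_le hab] at hL
    rw [← one_mul (b - a)]
    refine hL.absolutelyContinuousOnInterval.norm_sub_le_mul_of_ae_norm_deriv_le hab ?_
    filter_upwards [hderiv] with τ hτ hτab
    have hτ0 : 0 < τ := ha.trans_lt hτab.1
    obtain ⟨d, hd, hN⟩ := hτ hτ0.le
    have hd' := hd.hasDerivAt (Ici_mem_nhds hτ0)
    exact ⟨d, hd', hspeed τ hτ0 d hd' hN⟩
  intro s t hs ht
  rcases le_total s t with hst | hts
  · simpa [abs_of_nonneg (sub_nonneg.2 hst)] using hincr s t hs hst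
  · simpa [norm_sub_rev, abs_sub_comm, abs_of_nonneg (sub_nonneg.2 hts)] using hincr t s ht hts

/-- If the moving set `C` is `1`-Lipschitz continuous with respect to the excess, then the
solution of the associated sweeping process is `1`-Lipschitz continuous. -/
theorem sweeping_solution_one_lipschitz
    [CompleteSpace H]
    (C : ℝ → Set H) (hC : ∀ t : ℝ, 0 ≤ t → IsConvexBody (C t))
    (hLip : ∀ t s : ℝ, 0 ≤ t → t ≤ s → excess (C t) (C s) ≤ ENNReal.ofReal (s - t))
    (y₀ : H) (y : ℝ → H) (hy : LipSweepSol C y₀ y) :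
    ∀ s t : ℝ, 0 ≤ s → 0 ≤ t → ‖y t - y s‖ ≤ |t - s| :=
  sweeping_solution_one_lipschitz_general C hLip y₀ y hy
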